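/- arXiv:2407.11792 — 3 statements merged into one kernel-verified Lean document; each statement's English description precedes it below -/
import Mathlib

section
/- Shifted-coefficient recursion: with the setup of the previous statement and shifted coefficients A^τ_{μ, i_τ j_τ} := Σ_{x^τ} X^τ_{i_τ}(x^τ) α^τ_μ(x^τ−ν^τ_μ) X^τ_{j_τ}(x^τ−ν^τ_μ) (terms with x^τ−ν^τ_μ outside the state space omitted), if the shift decomposes as ν^τ_μ = (ν^{τ₀}_μ, ν^{τ₁}_μ) and the propensity factorizes, then A^τ_{μ, i_τ j_τ} = Σ Q^τ_{i_τ i_{τ₀} i_{τ₁}} Q^τ_{j_τ j_{τ₀} j_{τ₁}} A^{τ₀}_{μ, i_{τ₀} j_{τ₀}} A^{τ₁}_{μ, i_{τ₁} j_{τ₁}}. -/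
open scoped BigOperators


private lemma sum4 {ι β : Type*} [Fintype ι] {f : ι → β → ℝ}
    (h : ∀ i, Summable (f i)) : Summable (fun b => ∑ i, f i b) :=
  (hasSum_sum fun i _ => (h i).hasSum).summable

/-- Shifted-coefficient recursion: with a factorized propensity and a
shift decomposing as `ν^τ_μ = (ν^{τ₀}_μ, ν^{τ₁}_μ)` (the shifted propensity and the
shifted factors vanish outside the state space, encoded here by the functions being
defined on all integer states and the sums being over all states), the shifted
coefficients `A` satisfy the same recursion as the unshifted ones. -/
theorem shifted_coefficient_factorization_recursion
    (d0 d1 M rτ r0 r1 : ℕ)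
    (ν0 : Fin M → (Fin d0 → ℤ)) (ν1 : Fin M → (Fin d1 → ℤ))
    (α0 : Fin M → (Fin d0 → ℤ) → ℝ) (α1 : Fin M → (Fin d1 → ℤ) → ℝ)
    (X0 : Fin r0 → (Fin d0 → ℤ) → ℝ) (X1 : Fin r1 → (Fin d1 → ℤ) → ℝ)
    (Q : Fin rτ → Fin r0 → Fin r1 → ℝ)
    (Xτ : Fin rτ → ((Fin d0 → ℤ) × (Fin d1 → ℤ)) → ℝ)
    (hXτ : ∀ i x, Xτ i x = ∑ i0, ∑ i1, Q i i0 i1 * X0 i0 x.1 * X1 i1 x.2)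
    (ατ : Fin M → ((Fin d0 → ℤ) × (Fin d1 → ℤ)) → ℝ)
    (hατ : ∀ μ x, ατ μ x = α0 μ x.1 * α1 μ x.2)
    (hsum0 : ∀ μ (a c : Fin r0),
      Summable (fun y : Fin d0 → ℤ => X0 a y * α0 μ (y - ν0 μ) * X0 c (y - ν0 μ)))
    (hsum1 : ∀ μ (b e : Fin r1),
      Summable (fun z : Fin d1 → ℤ => X1 b z * α1 μ (z - ν1 μ) * X1 e (z - ν1 μ)))
    (Aτ : Fin M → Fin rτ → Fin rτ → ℝ)
    (hAτ : ∀ μ i j, Aτ μ i j = ∑' x : (Fin d0 → ℤ) × (Fin d1 → ℤ),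
      Xτ i x * ατ μ (x.1 - ν0 μ, x.2 - ν1 μ) * Xτ j (x.1 - ν0 μ, x.2 - ν1 μ))
    (A0 : Fin M → Fin r0 → Fin r0 → ℝ)
    (hA0 : ∀ μ i j, A0 μ i j = ∑' y : Fin d0 → ℤ,
      X0 i y * α0 μ (y - ν0 μ) * X0 j (y - ν0 μ))
    (A1 : Fin M → Fin r1 → Fin r1 → ℝ)
    (hA1 : ∀ μ i j, A1 μ i j = ∑' z : Fin d1 → ℤ,
      X1 i z * α1 μ (z - ν1 μ) * X1 j (z - ν1 μ)) :
    ∀ μ i j, Aτ μ i j =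
      ∑ i0, ∑ j0, ∑ i1, ∑ j1,
        Q i i0 i1 * Q j j0 j1 * A0 μ i0 j0 * A1 μ i1 j1 := by

  intro μ i j
  set g : Fin r0 → Fin r0 → (Fin d0 → ℤ) → ℝ :=
    fun a c y => X0 a y * α0 μ (y - ν0 μ) * X0 c (y - ν0 μ) with hg
  set h : Fin r1 → Fin r1 → (Fin d1 → ℤ) → ℝ :=
    fun b e z => X1 b z * α1 μ (z - ν1 μ) * X1 e (z - ν1 μ) with hh
  have hgS : ∀ a c, Summable (g a c) := fun a c => hsum0 μ a c
  have hhS : ∀ b e, Summable (h b e) := fun b e => hsum1 μ b e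
  have hprod : ∀ a c b e, Summable
      (fun x : (Fin d0 → ℤ) × (Fin d1 → ℤ) => g a c x.1 * h b e x.2) := by
    intro a c b e
    exact summable_mul_of_summable_norm
      (summable_norm_iff.mpr (hgS a c)) (summable_norm_iff.mpr (hhS b e))
  have hprodsum : ∀ a c b e,
      (∑' x : (Fin d0 → ℤ) × (Fin d1 → ℤ), g a c x.1 * h b e x.2)
        = (∑' y, g a c y) * (∑' z, h b e z) := by
    intro a c b e
    exact (Summable.tsum_mul_tsum (hgS a c) (hhS b e) (hprod a c b e)).symm
  have key : ∀ x : (Fin d0 → ℤ) × (Fin d1 → ℤ),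
      Xτ i x * ατ μ (x.1 - ν0 μ, x.2 - ν1 μ) * Xτ j (x.1 - ν0 μ, x.2 - ν1 μ)
        = ∑ i0, ∑ j0, ∑ i1, ∑ j1,
            Q i i0 i1 * Q j j0 j1 * (g i0 j0 x.1 * h i1 j1 x.2) := by
    intro x
    rw [hXτ, hXτ, hατ]
    simp only [Finset.sum_mul, Finset.mul_sum]
    simp only [Finset.sum_comm (γ := Fin r1) (α := Fin r0) (β := ℝ)]
    rw [Finset.sum_comm]
    refine Finset.sum_congr rfl fun _ _ => Finset.sum_congr rfl fun _ _ => ?_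
    rw [Finset.sum_comm]
    refine Finset.sum_congr rfl fun _ _ => Finset.sum_congr rfl fun _ _ => ?_
    simp only [hg, hh]; ring
  rw [hAτ, tsum_congr key]
  rw [Summable.tsum_finsetSum (fun i0 _ => sum4 fun j0 => sum4 fun i1 =>
    sum4 fun j1 => ((hprod i0 j0 i1 j1).mul_left _))]
  refine Finset.sum_congr rfl fun i0 _ => ?_
  rw [Summable.tsum_finsetSum (fun j0 _ => sum4 fun i1 =>
    sum4 fun j1 => ((hprod i0 j0 i1 j1).mul_left _))]
  refine Finset.sum_congr rfl fun j0 _ => ?_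
  rw [Summable.tsum_finsetSum (fun i1 _ => sum4 fun j1 => ((hprod i0 j0 i1 j1).mul_left _))]
  refine Finset.sum_congr rfl fun i1 _ => ?_
  rw [Summable.tsum_finsetSum (fun j1 _ => ((hprod i0 j0 i1 j1).mul_left _))]
  refine Finset.sum_congr rfl fun j1 _ => ?_
  rw [tsum_mul_left, hprodsum, hA0, hA1]
  ring
end

section
/- The exact S-step dynamics preserve total mass at the matrix level: if S(t) satisfies dS_{ij}/dt = −Σ_{k,l} S_{kl} (e_{ijkl} − f_{ijkl}) with e and f given by the inner products of the shifted and unshifted propensity forms against fixed orthonormal factors X⁰, X¹, and if the constant function 1 on Ω⁰ × Ω¹ lies in the span of the products {X⁰_i X¹_j}, then Σ_{x⁰,x¹} Σ_{ij} X⁰_i(x⁰) S_{ij}(t) X¹_j(x¹) is constant in time. -/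
/-!
With `φ_(i,j) = X⁰_i X¹_j`, the mass of `S` is the linear functional `Σ_p ⟨1, φ_p⟩ S_p`, so it
is conserved as soon as the row vector `(⟨1, φ_p⟩)_p` annihilates `e - f`. Because `1` lies in
the span of the orthonormal family `φ`, its coefficients are `⟨1, φ_p⟩`, hence
`Σ_p ⟨1, φ_p⟩ ⟨φ_p, h⟩ = Σ_Ω h` for every `h`. This turns `Σ_p ⟨1, φ_p⟩ (e - f)_pq` into the
difference of the total sums of the shifted and unshifted propensity terms, which cancel under
the substitution `x ↦ x - ν_μ` (out-of-range terms being dropped consistently on both sides).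
-/

open Finset

section Galerkin

variable {α ι : Type*} [Fintype ι] [DecidableEq ι] {Ω : Finset α} {φ : ι → α → ℝ}

theorem coeff_eq_sum_of_orthonormal
    (hφ : ∀ p q, ∑ x ∈ Ω, φ p x * φ q x = if p = q then 1 else 0)
    {c : ι → ℝ} (hc : ∀ x ∈ Ω, 1 = ∑ q, c q * φ q x) (p : ι) :
    c p = ∑ x ∈ Ω, φ p x :=
  calc c p = ∑ q, c q * ∑ x ∈ Ω, φ p x * φ q x := by simp [hφ]
    _ = ∑ x ∈ Ω, φ p x * ∑ q, c q * φ q x := by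
      simp_rw [mul_sum]
      rw [sum_comm]
      simp only [mul_left_comm]
    _ = ∑ x ∈ Ω, φ p x := sum_congr rfl fun x hx => by rw [← hc x hx, mul_one]

theorem sum_mul_inner_eq_sum_of_one_mem_span
    (hφ : ∀ p q, ∑ x ∈ Ω, φ p x * φ q x = if p = q then 1 else 0)
    (hspan : ∃ c : ι → ℝ, ∀ x ∈ Ω, 1 = ∑ q, c q * φ q x) (h : α → ℝ) :
    ∑ p, (∑ x ∈ Ω, φ p x) * ∑ y ∈ Ω, φ p y * h y = ∑ y ∈ Ω, h y := by
  obtain ⟨c, hc⟩ := hspan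
  calc ∑ p, (∑ x ∈ Ω, φ p x) * ∑ y ∈ Ω, φ p y * h y
      = ∑ y ∈ Ω, (∑ p, c p * φ p y) * h y := by
        simp_rw [← coeff_eq_sum_of_orthonormal hφ hc, mul_sum, sum_mul]
        rw [sum_comm]
        simp only [mul_assoc]
    _ = ∑ y ∈ Ω, h y := sum_congr rfl fun y hy => by rw [← hc y hy, one_mul]

end Galerkin

theorem sum_ite_sub_mem_eq_sum_ite_add_mem {G M : Type*} [AddGroup G] [DecidableEq G]
    [AddCommMonoid M] (Ω : Finset G) (v : G) (F : G → M) :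
    ∑ y ∈ Ω, (if y - v ∈ Ω then F (y - v) else 0) =
      ∑ z ∈ Ω, if z + v ∈ Ω then F z else 0 := by
  rw [← sum_filter, ← sum_filter]
  exact sum_nbij' (· - v) (· + v) (by simp +contextual) (by simp +contextual) (by simp) (by simp)
    fun _ _ => rfl

theorem sum_product_ite_sub_mem_eq_sum_product_ite_add_mem {G H M : Type*} [AddGroup G]
    [AddGroup H] [DecidableEq G] [DecidableEq H] [AddCommMonoid M] (Ω0 : Finset G)
    (Ω1 : Finset H) (v0 : G) (v1 : H) (F : G → H → M) :
    ∑ x ∈ Ω0 ×ˢ Ω1, (if x.1 - v0 ∈ Ω0 ∧ x.2 - v1 ∈ Ω1 then F (x.1 - v0) (x.2 - v1) else 0) =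
      ∑ x ∈ Ω0 ×ˢ Ω1, if x.1 + v0 ∈ Ω0 ∧ x.2 + v1 ∈ Ω1 then F x.1 x.2 else 0 := by
  simpa only [mem_product, Prod.fst_sub, Prod.snd_sub, Prod.fst_add, Prod.snd_add] using
    sum_ite_sub_mem_eq_sum_ite_add_mem (Ω0 ×ˢ Ω1) (v0, v1) fun x => F x.1 x.2

theorem sum_mul_eq_of_hasDerivAt_neg_sum_mul {ι : Type*} [Fintype ι] {K : ι → ι → ℝ}
    {w : ι → ℝ} (hw : ∀ q, ∑ p, w p * K p q = 0) {S : ℝ → ι → ℝ}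
    (hS : ∀ t p, HasDerivAt (fun s => S s p) (-∑ q, S t q * K p q) t) (t : ℝ) :
    ∑ p, w p * S t p = ∑ p, w p * S 0 p := by
  have hderiv : ∀ t, HasDerivAt (fun s => ∑ p, w p * S s p) 0 t := fun t => by
    refine (HasDerivAt.fun_sum fun p _ => (hS t p).const_mul (w p)).congr_deriv ?_
    calc ∑ p, w p * -∑ q, S t q * K p q = -∑ q, S t q * ∑ p, w p * K p q := by
          simp_rw [mul_neg, sum_neg_distrib, mul_sum]
          rw [sum_comm]
          simp only [mul_left_comm]
      _ = 0 := by simp [hw]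
  exact is_const_of_deriv_eq_zero (fun s => (hderiv s).differentiableAt)
    (fun s => (hderiv s).deriv) t 0

section TensorBasis

variable {α β ι κ : Type*}

def tensorBasis (X0 : ι → α → ℝ) (X1 : κ → β → ℝ) (p : ι × κ) (x : α × β) : ℝ :=
  X0 p.1 x.1 * X1 p.2 x.2

variable {Ω0 : Finset α} {Ω1 : Finset β} {X0 : ι → α → ℝ} {X1 : κ → β → ℝ}

theorem sum_tensorBasis_mul_tensorBasis [DecidableEq ι] [DecidableEq κ]
    (hX0 : ∀ i j, ∑ x0 ∈ Ω0, X0 i x0 * X0 j x0 = if i = j then 1 else 0)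
    (hX1 : ∀ i j, ∑ x1 ∈ Ω1, X1 i x1 * X1 j x1 = if i = j then 1 else 0) (p q : ι × κ) :
    ∑ x ∈ Ω0 ×ˢ Ω1, tensorBasis X0 X1 p x * tensorBasis X0 X1 q x =
      if p = q then 1 else 0 := by
  calc _ = (∑ x0 ∈ Ω0, X0 p.1 x0 * X0 q.1 x0) * ∑ x1 ∈ Ω1, X1 p.2 x1 * X1 q.2 x1 := by
        rw [sum_mul_sum, sum_product]
        exact sum_congr rfl fun _ _ => sum_congr rfl fun _ _ => by unfold tensorBasis; ring
    _ = _ := by simp only [hX0, hX1, ite_zero_mul_ite_zero, one_mul, Prod.ext_iff]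

theorem exists_one_eq_sum_mul_tensorBasis [Fintype ι] [Fintype κ]
    (hspan : ∃ c : ι → κ → ℝ, ∀ x0 ∈ Ω0, ∀ x1 ∈ Ω1,
      1 = ∑ i, ∑ j, c i j * X0 i x0 * X1 j x1) :
    ∃ c : ι × κ → ℝ, ∀ x ∈ Ω0 ×ˢ Ω1, 1 = ∑ q, c q * tensorBasis X0 X1 q x := by
  obtain ⟨c, hc⟩ := hspan
  refine ⟨fun q => c q.1 q.2, fun x hx => ?_⟩
  rw [mem_product] at hx
  simp only [Fintype.sum_prod_type, tensorBasis, ← mul_assoc, hc x.1 hx.1 x.2 hx.2]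

theorem sum_sum_sum_sum_mul_mul_eq_sum_tensorBasis [Fintype ι] [Fintype κ]
    (D : ι → κ → ℝ) :
    ∑ x0 ∈ Ω0, ∑ x1 ∈ Ω1, ∑ i, ∑ j, X0 i x0 * D i j * X1 j x1 =
      ∑ p, (∑ x ∈ Ω0 ×ˢ Ω1, tensorBasis X0 X1 p x) * D p.1 p.2 := by
  calc _ = ∑ x ∈ Ω0 ×ˢ Ω1, ∑ p, tensorBasis X0 X1 p x * D p.1 p.2 := by
        simp only [tensorBasis, sum_product, Fintype.sum_prod_type, mul_right_comm _ (D _ _)]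
    _ = _ := by simp only [sum_mul]; exact sum_comm

theorem sum_sum_sum_mul_eq_sum_tensorBasis_mul_sum {γ : Type*} (s : Finset γ) (p : ι × κ)
    (g : γ → α → β → ℝ) :
    ∑ μ ∈ s, ∑ x0 ∈ Ω0, ∑ x1 ∈ Ω1, X0 p.1 x0 * X1 p.2 x1 * g μ x0 x1 =
      ∑ x ∈ Ω0 ×ˢ Ω1, tensorBasis X0 X1 p x * ∑ μ ∈ s, g μ x.1 x.2 := by
  simp only [tensorBasis, sum_product, mul_sum]
  rw [sum_comm]
  exact sum_congr rfl fun _ _ => sum_comm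

end TensorBasis

/-- The exact S-step dynamics preserve the total mass at the matrix
level: if `S(t)` satisfies `dS_{ij}/dt = -Σ_{kl} S_{kl} (e_{ijkl} - f_{ijkl})` with
`e`, `f` the inner products of the shifted and unshifted propensity forms against
fixed orthonormal factors (out-of-range terms omitted on both shifted factors
consistently), and the constant function `1` on `Ω⁰ × Ω¹` lies in the span of the
products `X⁰_i X¹_j`, then `Σ_{x⁰,x¹} Σ_{ij} X⁰_i(x⁰) S_{ij}(t) X¹_j(x¹)` is
constant in time. -/
theorem S_step_mass_conservation
    (d0 d1 M r : ℕ)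
    (ν0 : Fin M → (Fin d0 → ℤ)) (ν1 : Fin M → (Fin d1 → ℤ))
    (α : Fin M → (Fin d0 → ℤ) → (Fin d1 → ℤ) → ℝ)
    (Ω0 : Finset (Fin d0 → ℤ)) (Ω1 : Finset (Fin d1 → ℤ))
    (X0 : Fin r → (Fin d0 → ℤ) → ℝ) (X1 : Fin r → (Fin d1 → ℤ) → ℝ)
    (hX0 : ∀ i j, ∑ x0 ∈ Ω0, X0 i x0 * X0 j x0 = if i = j then 1 else 0)
    (hX1 : ∀ i j, ∑ x1 ∈ Ω1, X1 i x1 * X1 j x1 = if i = j then 1 else 0)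
    (hspan : ∃ c : Fin r → Fin r → ℝ, ∀ x0 ∈ Ω0, ∀ x1 ∈ Ω1,
      (1 : ℝ) = ∑ i, ∑ j, c i j * X0 i x0 * X1 j x1)
    (e f : Fin r → Fin r → Fin r → Fin r → ℝ)
    (he : ∀ i j k l, e i j k l = ∑ μ, ∑ x0 ∈ Ω0, ∑ x1 ∈ Ω1,
      X0 i x0 * X1 j x1 *
        (if x0 - ν0 μ ∈ Ω0 ∧ x1 - ν1 μ ∈ Ω1 then
          α μ (x0 - ν0 μ) (x1 - ν1 μ) * X0 k (x0 - ν0 μ) * X1 l (x1 - ν1 μ)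
        else 0))
    (hf : ∀ i j k l, f i j k l = ∑ μ, ∑ x0 ∈ Ω0, ∑ x1 ∈ Ω1,
      X0 i x0 * X1 j x1 *
        (if x0 + ν0 μ ∈ Ω0 ∧ x1 + ν1 μ ∈ Ω1 then
          α μ x0 x1 * X0 k x0 * X1 l x1
        else 0))
    (S : ℝ → Fin r → Fin r → ℝ)
    (hS : ∀ t i j, HasDerivAt (fun s => S s i j)
      (-∑ k, ∑ l, S t k l * (e i j k l - f i j k l)) t) :
    ∀ t : ℝ,
      ∑ x0 ∈ Ω0, ∑ x1 ∈ Ω1, ∑ i, ∑ j, X0 i x0 * S t i j * X1 j x1 =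
      ∑ x0 ∈ Ω0, ∑ x1 ∈ Ω1, ∑ i, ∑ j, X0 i x0 * S 0 i j * X1 j x1 := by
  intro t
  have hK : ∀ q : Fin r × Fin r,
      ∑ p, (∑ x ∈ Ω0 ×ˢ Ω1, tensorBasis X0 X1 p x) *
        (e p.1 p.2 q.1 q.2 - f p.1 p.2 q.1 q.2) = 0 := by
    intro q
    have parseval := sum_mul_inner_eq_sum_of_one_mem_span
      (sum_tensorBasis_mul_tensorBasis hX0 hX1) (exists_one_eq_sum_mul_tensorBasis hspan)
    simp only [mul_sub, sum_sub_distrib, he, hf, sum_sum_sum_mul_eq_sum_tensorBasis_mul_sum,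
      parseval]
    rw [sum_comm, sum_comm (s := Ω0 ×ˢ Ω1), sub_eq_zero]
    exact sum_congr rfl fun μ _ => sum_product_ite_sub_mem_eq_sum_product_ite_add_mem Ω0 Ω1
      (ν0 μ) (ν1 μ) fun a b => α μ a b * X0 q.1 a * X1 q.2 b
  rw [sum_sum_sum_sum_mul_mul_eq_sum_tensorBasis,
    sum_sum_sum_sum_mul_mul_eq_sum_tensorBasis]
  exact sum_mul_eq_of_hasDerivAt_neg_sum_mul hK
    (fun t p => by simpa only [Fintype.sum_prod_type] using hS t p.1 p.2) t
end

section
/- Relation between S-step and C-step coefficients in the TTN integrator: if G^{τ₁}_{i_τ i_{τ₀} j_{τ₁}} has orthonormal columns in the combined index β = i_τ + r^τ i_{τ₀} (i.e., Σ_{i_τ, i_{τ₀}} G^{τ₁}_{i_τ i_{τ₀} k} G^{τ₁}_{i_τ i_{τ₀} l} = δ_{kl}) and the C-step coefficients are defined by g^τ and h^τ as inner products of the updated child factors against shifted/unshifted propensity-weighted factors, then e^{τ₁}_{i k j l} = Σ_{i_τ, j_τ} Σ_{i_{τ₀}, j_{τ₀}} G^{τ₁}_{i_τ i_{τ₀}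 k} G^{τ₁}_{j_τ j_{τ₀} l} g^τ_{i_τ i_{τ₀} i j_τ j_{τ₀} j} and analogously f^{τ₁} is obtained from h^τ. -/
open scoped BigOperators


lemma aux_contract
    (Ω0 Ω1 : Type*) [Fintype Ω0] [Fintype Ω1]
    (I I0 I1 : Type*) [Fintype I] [Fintype I0] [Fintype I1]
    (X0 : I0 → Ω0 → ℝ) (X1 : I1 → Ω1 → ℝ)
    (G : I → I0 → I1 → ℝ)
    (c : I → I → (Ω0 × Ω1) → (Ω0 × Ω1) → ℝ)
    (i k j l : I1) :
    (∑ x1, ∑ y1, X1 i x1 *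
      (∑ iτ, ∑ jτ, ∑ x0, ∑ y0,
        (∑ i0, G iτ i0 k * X0 i0 x0) * c iτ jτ (x0, x1) (y0, y1) *
          (∑ j0, G jτ j0 l * X0 j0 y0)) * X1 j y1)
    = ∑ iτ, ∑ jτ, ∑ i0, ∑ j0, G iτ i0 k * G jτ j0 l *
        (∑ x0, ∑ x1, ∑ y0, ∑ y1,
          X0 i0 x0 * X1 i x1 * c iτ jτ (x0, x1) (y0, y1) * X0 j0 y0 * X1 j y1) := by
  -- p = (x1, y1, iτ, jτ, x0, y0, j0, i0) ; q = (iτ, jτ, i0, j0, x0, x1, y0, y1)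
  have key := Fintype.sum_equiv
    (⟨fun p : Ω1 × Ω1 × I × I × Ω0 × Ω0 × I0 × I0 =>
        (p.2.2.1, p.2.2.2.1, p.2.2.2.2.2.2.2, p.2.2.2.2.2.2.1, p.2.2.2.2.1, p.1, p.2.2.2.2.2.1, p.2.1),
      fun q : I × I × I0 × I0 × Ω0 × Ω1 × Ω0 × Ω1 =>
        (q.2.2.2.2.2.1, q.2.2.2.2.2.2.2, q.1, q.2.1, q.2.2.2.2.1, q.2.2.2.2.2.2.1, q.2.2.2.1, q.2.2.1),
      by rintro ⟨a,b,c,d,e,f,g,h⟩; rfl,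
      by rintro ⟨a,b,c,d,e,f,g,h⟩; rfl⟩ :
      (Ω1 × Ω1 × I × I × Ω0 × Ω0 × I0 × I0) ≃ (I × I × I0 × I0 × Ω0 × Ω1 × Ω0 × Ω1))
    (fun p => X1 i p.1 * (G p.2.2.1 p.2.2.2.2.2.2.2 k * X0 p.2.2.2.2.2.2.2 p.2.2.2.2.1 *
        c p.2.2.1 p.2.2.2.1 (p.2.2.2.2.1, p.1) (p.2.2.2.2.2.1, p.2.1) *
        (G p.2.2.2.1 p.2.2.2.2.2.2.1 l * X0 p.2.2.2.2.2.2.1 p.2.2.2.2.2.1)) * X1 j p.2.1)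
    (fun q => G q.1 q.2.2.1 k * G q.2.1 q.2.2.2.1 l *
        (X0 q.2.2.1 q.2.2.2.2.1 * X1 i q.2.2.2.2.2.1 *
          c q.1 q.2.1 (q.2.2.2.2.1, q.2.2.2.2.2.1) (q.2.2.2.2.2.2.1, q.2.2.2.2.2.2.2) *
          X0 q.2.2.2.1 q.2.2.2.2.2.2.1 * X1 j q.2.2.2.2.2.2.2))
    (by rintro ⟨x1,y1,iτ,jτ,x0,y0,j0,i0⟩; dsimp; ring)
  simp only [Fintype.sum_prod_type] at key
  simp only [Finset.sum_mul, Finset.mul_sum]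
  exact key


/-- Relation between the S-step and C-step coefficients in the TTN
integrator: if the connection tensor `G^{τ₁}` has orthonormal columns in the combined
index `(i_τ, i_{τ₀})`, and the C-step coefficients `g^τ, h^τ` are the inner products of
the child factors against the (shifted/unshifted) propensity-weighted factors (here
encoded by arbitrary kernels `cg, ch`), then the right-child S-step coefficients
`e^{τ₁}, f^{τ₁}` (defined via the contracted factors `W`) are obtained from `g^τ, h^τ`
by contraction with `G^{τ₁}`. -/
theorem S_step_from_C_step_coefficients
    (Ω0 Ω1 : Type*) [Fintype Ω0] [Fintype Ω1]
    (I I0 I1 : Type*) [Fintype I] [Fintype I0] [Fintype I1] [DecidableEq I1]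
    (X0 : I0 → Ω0 → ℝ) (X1 : I1 → Ω1 → ℝ)
    (G : I → I0 → I1 → ℝ)
    (hG : ∀ k l : I1, ∑ iτ : I, ∑ i0 : I0, G iτ i0 k * G iτ i0 l =
      if k = l then 1 else 0)
    (cg ch : I → I → (Ω0 × Ω1) → (Ω0 × Ω1) → ℝ)
    (W : I → I1 → Ω0 → ℝ)
    (hW : ∀ iτ k x0, W iτ k x0 = ∑ i0, G iτ i0 k * X0 i0 x0)
    (g h : I → I0 → I1 → I → I0 → I1 → ℝ)
    (hg : ∀ iτ i0 i1 jτ j0 j1, g iτ i0 i1 jτ j0 j1 =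
      ∑ x0, ∑ x1, ∑ y0, ∑ y1,
        X0 i0 x0 * X1 i1 x1 * cg iτ jτ (x0, x1) (y0, y1) * X0 j0 y0 * X1 j1 y1)
    (hh : ∀ iτ i0 i1 jτ j0 j1, h iτ i0 i1 jτ j0 j1 =
      ∑ x0, ∑ x1, ∑ y0, ∑ y1,
        X0 i0 x0 * X1 i1 x1 * ch iτ jτ (x0, x1) (y0, y1) * X0 j0 y0 * X1 j1 y1)
    (e f : I1 → I1 → I1 → I1 → ℝ)
    (he : ∀ i k j l, e i k j l = ∑ x1, ∑ y1, X1 i x1 *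
      (∑ iτ, ∑ jτ, ∑ x0, ∑ y0,
        W iτ k x0 * cg iτ jτ (x0, x1) (y0, y1) * W jτ l y0) * X1 j y1)
    (hf : ∀ i k j l, f i k j l = ∑ x1, ∑ y1, X1 i x1 *
      (∑ iτ, ∑ jτ, ∑ x0, ∑ y0,
        W iτ k x0 * ch iτ jτ (x0, x1) (y0, y1) * W jτ l y0) * X1 j y1) :
    ∀ i k j l : I1,
      e i k j l = ∑ iτ, ∑ jτ, ∑ i0, ∑ j0,
        G iτ i0 k * G jτ j0 l * g iτ i0 i jτ j0 j ∧
      f i k j l = ∑ iτ, ∑ jτ, ∑ i0, ∑ j0,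
        G iτ i0 k * G jτ j0 l * h iτ i0 i jτ j0 j := by
  intro i k j l
  constructor
  · rw [he i k j l]
    simp only [hW, hg]
    exact aux_contract Ω0 Ω1 I I0 I1 X0 X1 G cg i k j l
  · rw [hf i k j l]
    simp only [hW, hh]
    exact aux_contract Ω0 Ω1 I I0 I1 X0 X1 G ch i k j l
end
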